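/- For every f : {−1,1}^n → ℝ, every r ∈ (−1,1), and every s ∈ {1,…,n}: w_s(f,r) = (1−r²)^{s/2} · Σ_{t=s}^{n} C(t,s) · w_t(f,0) · r^{t−s}, where C(t,s) is the binomial coefficient. -/

import Mathlib

/-!
Expand `f` in the uniform characters, `f = ∑_T f̂(T,0) χ_T(·,0)`. Under `μ_r` the coordinates are
independent, so `f̂(S,r)` of `χ_T(·,0)` factorizes: with `σ = √(1 - r²)`, a coordinate in `S ∩ T`
contributes `E_r[x (x - r)/σ] = σ`, one in `S \ T` contributes `E_r[(x - r)/σ] = 0`, one in `T \ S`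
contributes `E_r[x] = r`. Hence `f̂(S,r) = ∑_{T ⊇ S} f̂(T,0) σ^|S| r^(|T|-|S|)`, and summing over
`|S| = s` counts the `C(|T|, s)` subsets of each `T`.
-/

open Finset

noncomputable section

/-- ±1 encoding of a Boolean. -/
def pmVal (b : Bool) : ℝ := if b then 1 else -1

/-- Probability weight of the point `x` of the cube under the product measure with
bias vector `r` (coordinate `i` equals `1` with probability `(1 + r i)/2`). -/
def cubeWt {n : ℕ} (r : Fin n → ℝ) (x : Fin n → Bool) : ℝ :=
  ∏ i, (1 + r i * pmVal (x i)) / 2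

/-- Expectation of `f : {-1,1}^n → ℝ` under the product measure with bias vector `r`. -/
def biasedExp {n : ℕ} (r : Fin n → ℝ) (f : (Fin n → Bool) → ℝ) : ℝ :=
  ∑ x : Fin n → Bool, cubeWt r x * f x

/-- The biased character `χ_S(x, r) = ∏_{i ∈ S} (x_i - r_i)/√(1 - r_i²)`. -/
def biasedChi {n : ℕ} (r : Fin n → ℝ) (S : Finset (Fin n)) (x : Fin n → Bool) : ℝ :=
  ∏ i ∈ S, (pmVal (x i) - r i) / Real.sqrt (1 - (r i) ^ 2)

/-- Biased Fourier coefficient `f̂(S, r) = E_r[f · χ_S(·, r)]`. -/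
def biasedFourier {n : ℕ} (r : Fin n → ℝ) (f : (Fin n → Bool) → ℝ) (S : Finset (Fin n)) : ℝ :=
  biasedExp r (fun x => f x * biasedChi r S x)

/-- Weight of the `s`-th Fourier level: `w_s(f, r) = Σ_{|S| = s} f̂(S, r)`. -/
def levelWeight {n : ℕ} (r : Fin n → ℝ) (f : (Fin n → Bool) → ℝ) (s : ℕ) : ℝ :=
  ∑ S ∈ univ.filter (fun S : Finset (Fin n) => S.card = s), biasedFourier r f S

open Classical in
/-- Degree of `f`: the largest `|S|` with `f̂(S, 0) ≠ 0`. -/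
def fourierDeg {n : ℕ} (f : (Fin n → Bool) → ℝ) : ℕ :=
  (univ.filter (fun S : Finset (Fin n) => biasedFourier (fun _ => (0 : ℝ)) f S ≠ 0)).sup
    Finset.card


lemma pmVal_mul_pmVal_add_one (b b' : Bool) :
    pmVal b * pmVal b' + 1 = if b = b' then 2 else 0 := by
  cases b <;> cases b' <;> norm_num [pmVal]

lemma biasedChi_zero {n : ℕ} (T : Finset (Fin n)) (x : Fin n → Bool) :
    biasedChi (fun _ => 0) T x = ∏ i ∈ T, pmVal (x i) := by
  simp [biasedChi]

lemma cubeWt_zero {n : ℕ} (x : Fin n → Bool) : cubeWt (fun _ => 0) x = 2⁻¹ ^ n := by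
  simp [cubeWt]

lemma sum_biasedChi_zero_mul_biasedChi_zero {n : ℕ} (x y : Fin n → Bool) :
    ∑ T, biasedChi (fun _ => 0) T y * biasedChi (fun _ => 0) T x
      = if y = x then 2 ^ n else 0 := by
  simp only [biasedChi_zero, ← prod_mul_distrib, ← Finset.powerset_univ, ← prod_add_one,
    pmVal_mul_pmVal_add_one]
  split_ifs with hyx
  · simp [hyx]
  · obtain ⟨i, hi⟩ := Function.ne_iff.mp hyx
    exact prod_eq_zero (mem_univ i) (if_neg hi)

theorem eq_sum_biasedFourier_zero_mul_biasedChi_zero {n : ℕ} (f : (Fin n → Bool) → ℝ)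
    (x : Fin n → Bool) :
    f x = ∑ T, biasedFourier (fun _ => 0) f T * biasedChi (fun _ => 0) T x := by
  simp only [biasedFourier, biasedExp, cubeWt_zero, sum_mul]
  rw [sum_comm]
  simp only [mul_assoc, ← mul_sum, sum_biasedChi_zero_mul_biasedChi_zero, mul_ite, mul_zero,
    sum_ite_eq', mem_univ, if_true]
  rw [mul_left_comm, ← mul_pow]
  norm_num

lemma biasedFourier_sum_mul {n : ℕ} {ι : Type*} [Fintype ι] (r : Fin n → ℝ) (c : ι → ℝ)
    (g : ι → (Fin n → Bool) → ℝ) (S : Finset (Fin n)) :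
    biasedFourier r (fun x => ∑ T, c T * g T x) S = ∑ T, c T * biasedFourier r (g T) S := by
  simp only [biasedFourier, biasedExp, sum_mul, mul_sum]
  rw [sum_comm]
  exact sum_congr rfl fun _ _ => sum_congr rfl fun _ _ => by ring

theorem biasedFourier_eq_sum_biasedFourier_zero {n : ℕ} (r : Fin n → ℝ)
    (f : (Fin n → Bool) → ℝ) (S : Finset (Fin n)) :
    biasedFourier r f S = ∑ T, biasedFourier (fun _ => 0) f T
      * biasedFourier r (biasedChi (fun _ => 0) T) S := by
  conv_lhs => rw [funext (eq_sum_biasedFourier_zero_mul_biasedChi_zero f)]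
  exact biasedFourier_sum_mul r _ _ S

lemma biasedExp_prod {n : ℕ} (r : Fin n → ℝ) (g : Fin n → Bool → ℝ) :
    biasedExp r (fun x => ∏ i, g i (x i))
      = ∏ i, ((1 + r i) / 2 * g i true + (1 - r i) / 2 * g i false) := by
  have hcoord : ∀ i, (1 + r i) / 2 * g i true + (1 - r i) / 2 * g i false
      = ∑ b, (1 + r i * pmVal b) / 2 * g i b := fun i => by
    simp only [Fintype.sum_bool, pmVal, if_true, Bool.false_eq_true, if_false]; ring
  simp only [hcoord, Fintype.prod_sum, biasedExp, cubeWt, prod_mul_distrib]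

lemma biasedExp_coord (ρ : ℝ) (p q : Prop) [Decidable p] [Decidable q] :
    (1 + ρ) / 2 * ((if q then pmVal true else 1)
        * (if p then (pmVal true - ρ) / √(1 - ρ ^ 2) else 1))
      + (1 - ρ) / 2 * ((if q then pmVal false else 1)
        * (if p then (pmVal false - ρ) / √(1 - ρ ^ 2) else 1))
      = if p then (if q then √(1 - ρ ^ 2) else 0) else (if q then ρ else 1) := by
  simp only [pmVal, if_true, Bool.false_eq_true, if_false]
  split_ifs
  -- `Real.div_sqrt` holds for every real, both sides being `0` when `1 - ρ ^ 2 ≤ 0`.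
  · trans (1 - ρ ^ 2) / √(1 - ρ ^ 2)
    · ring
    · exact Real.div_sqrt
  all_goals ring

lemma prod_ite_ite_eq_ite_subset {ι M : Type*} [Fintype ι] [DecidableEq ι]
    [CommMonoidWithZero M] (a b : ι → M) (S T : Finset ι) :
    ∏ i, (if i ∈ S then (if i ∈ T then a i else 0) else (if i ∈ T then b i else 1))
      = if S ⊆ T then (∏ i ∈ S, a i) * ∏ i ∈ T \ S, b i else 0 := by
  rw [← prod_mul_prod_compl S, prod_congr rfl fun i hi => if_pos hi,
    prod_congr rfl fun i hi => if_neg (mem_compl.mp hi), prod_ite_zero, prod_ite_mem,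
    sdiff_eq_inter_compl, inter_comm, ite_zero_mul]
  rfl

theorem biasedFourier_biasedChi_zero {n : ℕ} (r : Fin n → ℝ) (S T : Finset (Fin n)) :
    biasedFourier r (biasedChi (fun _ => 0) T) S
      = if S ⊆ T then (∏ i ∈ S, √(1 - r i ^ 2)) * ∏ i ∈ T \ S, r i else 0 := by
  set g : Fin n → Bool → ℝ := fun i b => (if i ∈ T then pmVal b else 1)
    * (if i ∈ S then (pmVal b - r i) / √(1 - r i ^ 2) else 1)
  have hprod : (fun x => biasedChi (fun _ => 0) T x * biasedChi r S x)
      = fun x => ∏ i, g i (x i) := funext fun x => by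
    rw [prod_mul_distrib, prod_ite_mem, prod_ite_mem, univ_inter, univ_inter, biasedChi_zero,
      biasedChi]
  rw [biasedFourier, hprod, biasedExp_prod]
  simp only [g, biasedExp_coord]
  exact prod_ite_ite_eq_ite_subset _ _ S T

theorem biasedFourier_const_biasedChi_zero {n : ℕ} (ρ : ℝ) (S T : Finset (Fin n)) :
    biasedFourier (fun _ => ρ) (biasedChi (fun _ => 0) T) S
      = if S ⊆ T then √(1 - ρ ^ 2) ^ #S * ρ ^ (#T - #S) else 0 := by
  rw [biasedFourier_biasedChi_zero]
  split_ifs with hST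
  · rw [prod_const, prod_const, card_sdiff_of_subset hST]
  · rfl

lemma sum_card_eq_ite_subset {ι R : Type*} [Fintype ι] [DecidableEq ι] [Semiring R]
    (T : Finset ι) (s : ℕ) (c : R) :
    ∑ S ∈ univ.filter (fun S : Finset ι => #S = s), (if S ⊆ T then c else 0)
      = (#T).choose s * c := by
  rw [← sum_filter, filter_filter, sum_const, nsmul_eq_mul, ← card_powersetCard]
  congr 3
  ext S
  simp [mem_powersetCard, and_comm]

lemma sum_mul_biasedFourier_eq_sum_levelWeight {n : ℕ} (r : Fin n → ℝ)
    (f : (Fin n → Bool) → ℝ) (F : ℕ → ℝ) :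
    ∑ T, F #T * biasedFourier r f T = ∑ t ∈ range (n + 1), F t * levelWeight r f t := by
  rw [← sum_fiberwise_of_maps_to (g := fun T : Finset (Fin n) => #T)
    fun T _ => mem_range_succ_iff.mpr (card_le_univ T |>.trans_eq (Fintype.card_fin n))]
  refine sum_congr rfl fun t _ => ?_
  rw [levelWeight, mul_sum]
  exact sum_congr (by ext; simp) fun T hT => by rw [(mem_filter.mp hT).2]

lemma sum_range_choose_mul_eq_sum_Icc {R : Type*} [Semiring R] (s n : ℕ) (g : ℕ → R) :
    ∑ t ∈ range (n + 1), (t.choose s : R) * g t = ∑ t ∈ Icc s n, (t.choose s : R) * g t := by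
  refine (sum_subset (fun t ht => mem_range_succ_iff.mpr (mem_Icc.mp ht).2)
    fun t ht hnot => ?_).symm
  have hts : t < s := by
    by_contra h
    exact hnot (mem_Icc.mpr ⟨not_lt.mp h, mem_range_succ_iff.mp ht⟩)
  simp [Nat.choose_eq_zero_of_lt hts]

theorem stmt4_general {n : ℕ} (f : (Fin n → Bool) → ℝ) (r : ℝ) (s : ℕ) :
    levelWeight (fun _ => r) f s
      = (Real.sqrt (1 - r ^ 2)) ^ s
          * ∑ t ∈ Finset.Icc s n,
              (t.choose s : ℝ) * levelWeight (fun _ => (0 : ℝ)) f t * r ^ (t - s) := by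
  calc levelWeight (fun _ => r) f s
      = ∑ S ∈ univ.filter (fun S : Finset (Fin n) => #S = s), ∑ T, biasedFourier (fun _ => 0) f T
          * (if S ⊆ T then √(1 - r ^ 2) ^ s * r ^ (#T - s) else 0) :=
        sum_congr rfl fun S hS => by
          rw [biasedFourier_eq_sum_biasedFourier_zero]
          simp only [biasedFourier_const_biasedChi_zero, (mem_filter.mp hS).2]
    _ = √(1 - r ^ 2) ^ s
          * ∑ T, ((#T).choose s * r ^ (#T - s)) * biasedFourier (fun _ => 0) f T := by
        rw [sum_comm, mul_sum]
        refine sum_congr rfl fun T _ => ?_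
        rw [← mul_sum, sum_card_eq_ite_subset]
        ring
    _ = _ := by
        rw [sum_mul_biasedFourier_eq_sum_levelWeight _ _
            (fun t : ℕ => (t.choose s : ℝ) * r ^ (t - s))]
        simp only [mul_assoc]
        rw [sum_range_choose_mul_eq_sum_Icc]
        exact congrArg _ (sum_congr rfl fun t _ => by ring)

/-- For every `f : {-1,1}^n → ℝ`, `r ∈ (-1,1)`, and `1 ≤ s ≤ n`:
`w_s(f,r) = (1-r²)^{s/2} · Σ_{t=s}^{n} C(t,s) · w_t(f,0) · r^{t-s}`. -/
theorem stmt4 {n : ℕ} (f : (Fin n → Bool) → ℝ) (r : ℝ) (hr : r ∈ Set.Ioo (-1 : ℝ) 1)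
    (s : ℕ) (hs : 1 ≤ s) (hsn : s ≤ n) :
    levelWeight (fun _ => r) f s
      = (Real.sqrt (1 - r ^ 2)) ^ s
          * ∑ t ∈ Finset.Icc s n,
              (t.choose s : ℝ) * levelWeight (fun _ => (0 : ℝ)) f t * r ^ (t - s) :=
  stmt4_general f r s
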